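/- The characterization of the basic interpretation at linear implication: in ILLᵇ extended with the linear axiom of choice AC_l: ∀x∃y A_∀(y) ⊸ ∃f∀x A_∀(fx), the linear Markov principle MP_l: (∀x A_qf ⊸ B_qf) ⊸ ∃x(A_qf ⊸ B_qf), and linear independence of premises IP_l: (A_∀ ⊸ ∃y B_∀) ⊸ ∃y(A_∀ ⊸ B_∀), if A ⊸⊸ ∃x∀y |A|ˣ_y and B ⊸⊸ ∃v∀w |B|ᵛ_w are derivable, then (A ⊸ B) ⊸⊸ ∃f,g ∀x,w (|A|ˣ_{fxw} ⊸ |B|^{gx}_w) is derivable. -/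
import Mathlib


inductive Fml : Type 1 where
  | atom : ℕ → Fml
  | zero : Fml
  | tensor : Fml → Fml → Fml
  | limp : Fml → Fml → Fml
  | wth : Fml → Fml → Fml
  | oplus : Fml → Fml → Fml
  | bang : Fml → Fml
  | uni : (α : Type) → (α → Fml) → Fml
  | exi : (α : Type) → (α → Fml) → Fml

inductive Deriv : List Fml → Fml → Prop where
  | id : ∀ (A : Fml), Deriv [A] A
  | exch : ∀ {Γ Δ : List (Fml)} {A : Fml}, List.Perm Γ Δ → Deriv Γ A → Deriv Δ A
  | cut : ∀ {Γ Δ : List (Fml)} {A B : Fml}, Deriv Γ A → Deriv (A :: Δ) B → Deriv (Γ ++ Δ) B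
  | zeroL : ∀ (Γ : List (Fml)) (A : Fml), Deriv (Fml.zero :: Γ) A
  | tensorR : ∀ {Γ Δ : List (Fml)} {A B : Fml}, Deriv Γ A → Deriv Δ B → Deriv (Γ ++ Δ) (Fml.tensor A B)
  | tensorL : ∀ {Γ : List (Fml)} {A B C : Fml}, Deriv (A :: B :: Γ) C → Deriv (Fml.tensor A B :: Γ) C
  | limpR : ∀ {Γ : List (Fml)} {A B : Fml}, Deriv (A :: Γ) B → Deriv Γ (Fml.limp A B)
  | limpL : ∀ {Γ Δ : List (Fml)} {A B C : Fml}, Deriv Γ A → Deriv (B :: Δ) C → Deriv (Fml.limp A B :: (Γ ++ Δ)) C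
  | withR : ∀ {Γ : List (Fml)} {A B : Fml}, Deriv Γ A → Deriv Γ B → Deriv Γ (Fml.wth A B)
  | withL₁ : ∀ {Γ : List (Fml)} {A B C : Fml}, Deriv (A :: Γ) C → Deriv (Fml.wth A B :: Γ) C
  | withL₂ : ∀ {Γ : List (Fml)} {A B C : Fml}, Deriv (B :: Γ) C → Deriv (Fml.wth A B :: Γ) C
  | oplusR₁ : ∀ {Γ : List (Fml)} {A B : Fml}, Deriv Γ A → Deriv Γ (Fml.oplus A B)
  | oplusR₂ : ∀ {Γ : List (Fml)} {A B : Fml}, Deriv Γ B → Deriv Γ (Fml.oplus A B)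
  | oplusL : ∀ {Γ : List (Fml)} {A B C : Fml}, Deriv (A :: Γ) C → Deriv (B :: Γ) C → Deriv (Fml.oplus A B :: Γ) C
  | contr : ∀ {Γ : List (Fml)} {A B : Fml}, Deriv (Fml.bang A :: Fml.bang A :: Γ) B → Deriv (Fml.bang A :: Γ) B
  | weak : ∀ {Γ : List (Fml)} {A B : Fml}, Deriv Γ B → Deriv (Fml.bang A :: Γ) B
  | bangR : ∀ {Γ : List (Fml)} {A : Fml}, Deriv (Γ.map Fml.bang) A → Deriv (Γ.map Fml.bang) (Fml.bang A)
  | bangL : ∀ {Γ : List (Fml)} {A B : Fml}, Deriv (A :: Γ) B → Deriv (Fml.bang A :: Γ) B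
  | uniR : ∀ {Γ : List (Fml)} (α : Type) (A : α → Fml), (∀ a, Deriv Γ (A a)) → Deriv Γ (Fml.uni α A)
  | uniL : ∀ {Γ : List (Fml)} {B : Fml} (α : Type) (A : α → Fml) (t : α), Deriv (A t :: Γ) B → Deriv (Fml.uni α A :: Γ) B
  | exiR : ∀ {Γ : List (Fml)} (α : Type) (A : α → Fml) (t : α), Deriv Γ (A t) → Deriv Γ (Fml.exi α A)
  | exiL : ∀ {Γ : List (Fml)} {B : Fml} (α : Type) (A : α → Fml), (∀ a, Deriv (A a :: Γ) B) → Deriv (Fml.exi α A :: Γ) B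

/-- Linear bi-implication: (A ⊸ B) & (B ⊸ A). -/
def biimp (A B : Fml) : Fml := Fml.wth (Fml.limp A B) (Fml.limp B A)

/-- Quantifier-free formulas. -/
def Fml.qf : Fml → Prop
  | .atom _ => True
  | .zero => True
  | .tensor A B => A.qf ∧ B.qf
  | .limp A B => A.qf ∧ B.qf
  | .wth A B => A.qf ∧ B.qf
  | .oplus A B => A.qf ∧ B.qf
  | .bang A => A.qf
  | .uni _ _ => False
  | .exi _ _ => False

/-- Purely universal formulas: a block of universal quantifiers over a quantifier-free matrix. -/
def Fml.univ : Fml → Prop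
  | .uni _ A => ∀ a, (A a).univ
  | A => A.qf


namespace Deriv

lemma comp {P Q R : Fml} (h1 : Deriv [P] Q) (h2 : Deriv [Q] R) : Deriv [P] R :=
  Deriv.cut (Δ := []) h1 h2

lemma ofLimp {P Q : Fml} (h : Deriv [] (Fml.limp P Q)) : Deriv [P] Q :=
  Deriv.cut (Γ := []) h (Deriv.limpL (Δ := []) (Deriv.id P) (Deriv.id Q))

lemma proj1 {P Q : Fml} (h : Deriv [] (Fml.wth P Q)) : Deriv [] P :=
  Deriv.cut (Γ := []) (Δ := []) h (Deriv.withL₁ (Deriv.id P))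

lemma proj2 {P Q : Fml} (h : Deriv [] (Fml.wth P Q)) : Deriv [] Q :=
  Deriv.cut (Γ := []) (Δ := []) h (Deriv.withL₂ (Deriv.id Q))

lemma uniMono {α : Type} {P Q : α → Fml} (h : ∀ x, Deriv [P x] (Q x)) :
    Deriv [Fml.uni α P] (Fml.uni α Q) :=
  Deriv.uniR α Q (fun x => Deriv.uniL α P x (h x))

end Deriv

lemma qf_univ : ∀ {F : Fml}, F.qf → F.univ := by
  intro F h
  cases F <;> first | exact h | exact h.elim

/-- characterization of the basic interpretation at linear implication,
in ILLᵇ + AC_l + MP_l + IP_l. -/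
theorem stmt16
    (hAC : ∀ (α β : Type) (P : α → β → Fml), (∀ x y, (P x y).univ) →
        Deriv [] (Fml.limp (Fml.uni α (fun x => Fml.exi β (fun y => P x y)))
                   (Fml.exi (α → β) (fun f => Fml.uni α (fun x => P x (f x))))))
    (hMP : ∀ (α : Type) (P : α → Fml) (Q : Fml), (∀ x, (P x).qf) → Q.qf →
        Deriv [] (Fml.limp (Fml.limp (Fml.uni α P) Q)
                   (Fml.exi α (fun x => Fml.limp (P x) Q))))
    (hIP : ∀ (β : Type) (P : Fml) (Q : β → Fml), P.univ → (∀ y, (Q y).univ) →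
        Deriv [] (Fml.limp (Fml.limp P (Fml.exi β Q))
                   (Fml.exi β (fun y => Fml.limp P (Q y)))))
    (X Y V W : Type) (a : X → Y → Fml) (b : V → W → Fml)
    (hqa : ∀ x y, (a x y).qf) (hqb : ∀ v w, (b v w).qf)
    (A B : Fml)
    (hA : Deriv [] (biimp A (Fml.exi X (fun x => Fml.uni Y (fun y => a x y)))))
    (hB : Deriv [] (biimp B (Fml.exi V (fun v => Fml.uni W (fun w => b v w))))) :
    Deriv [] (biimp (Fml.limp A B)
      (Fml.exi (X → W → Y) (fun f => Fml.exi (X → V) (fun g =>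
        Fml.uni X (fun x => Fml.uni W (fun w =>
          Fml.limp (a x (f x w)) (b (g x) w))))))) := by
  set A' := Fml.exi X (fun x => Fml.uni Y (fun y => a x y)) with hA'def
  set B' := Fml.exi V (fun v => Fml.uni W (fun w => b v w)) with hB'def
  have hAA' : Deriv [A] A' := Deriv.ofLimp (Deriv.proj1 hA)
  have hA'A : Deriv [A'] A := Deriv.ofLimp (Deriv.proj2 hA)
  have hBB' : Deriv [B] B' := Deriv.ofLimp (Deriv.proj1 hB)
  have hB'B : Deriv [B'] B := Deriv.ofLimp (Deriv.proj2 hB)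
  apply Deriv.withR <;> apply Deriv.limpR
  · -- forward: [A ⊸ B] ⊢ C
    have conv0 : Deriv [Fml.limp A B] (Fml.limp A' B') := by
      apply Deriv.limpR
      exact Deriv.exch (List.Perm.swap _ _ _) (Deriv.limpL (Δ := []) hA'A hBB')
    refine conv0.comp ?_
    have D0 : Deriv [Fml.limp A' B']
        (Fml.uni X (fun x => Fml.limp (Fml.uni Y (fun y => a x y)) B')) := by
      apply Deriv.uniR
      intro x
      apply Deriv.limpR
      refine Deriv.exch (List.Perm.swap _ _ _) ?_
      exact Deriv.limpL (Δ := []) (Deriv.exiR X _ x (Deriv.id _)) (Deriv.id B')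
    refine D0.comp ?_
    -- pointwise transformation under ∀x
    have s5 : ∀ x : X, Deriv [Fml.limp (Fml.uni Y (fun y => a x y)) B']
        (Fml.exi (V × (W → Y)) (fun p => Fml.uni W (fun w =>
          Fml.limp (a x (p.2 w)) (b p.1 w)))) := by
      intro x
      have s1 : Deriv [Fml.limp (Fml.uni Y (fun y => a x y)) B']
          (Fml.exi V (fun v => Fml.limp (Fml.uni Y (fun y => a x y))
            (Fml.uni W (fun w => b v w)))) :=
        Deriv.ofLimp (hIP V _ _ (fun y => qf_univ (hqa x y))
          (fun v w => qf_univ (hqb v w)))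
      refine s1.comp ?_
      apply Deriv.exiL
      intro v
      have s2 : Deriv [Fml.limp (Fml.uni Y (fun y => a x y)) (Fml.uni W (fun w => b v w))]
          (Fml.uni W (fun w => Fml.limp (Fml.uni Y (fun y => a x y)) (b v w))) := by
        apply Deriv.uniR
        intro w
        apply Deriv.limpR
        refine Deriv.exch (List.Perm.swap _ _ _) ?_
        exact Deriv.limpL (Δ := []) (Deriv.id _) (Deriv.uniL W _ w (Deriv.id _))
      have s3 : Deriv [Fml.uni W (fun w => Fml.limp (Fml.uni Y (fun y => a x y)) (b v w))]
          (Fml.uni W (fun w => Fml.exi Y (fun y => Fml.limp (a x y) (b v w)))) :=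
        Deriv.uniMono (fun w => Deriv.ofLimp (hMP Y (fun y => a x y) (b v w) (hqa x) (hqb v w)))
      have s4 : Deriv [Fml.uni W (fun w => Fml.exi Y (fun y => Fml.limp (a x y) (b v w)))]
          (Fml.exi (W → Y) (fun f' => Fml.uni W (fun w =>
            Fml.limp (a x (f' w)) (b v w)))) :=
        Deriv.ofLimp (hAC W Y (fun w y => Fml.limp (a x y) (b v w))
          (fun w y => qf_univ ⟨hqa x y, hqb v w⟩))
      refine ((s2.comp s3).comp s4).comp ?_
      apply Deriv.exiL
      intro f'
      exact Deriv.exiR _ _ (v, f') (Deriv.id _)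
    refine (Deriv.uniMono s5).comp ?_
    have D2 : Deriv [Fml.uni X (fun x => Fml.exi (V × (W → Y)) (fun p =>
        Fml.uni W (fun w => Fml.limp (a x (p.2 w)) (b p.1 w))))]
        (Fml.exi (X → V × (W → Y)) (fun h => Fml.uni X (fun x =>
          Fml.uni W (fun w => Fml.limp (a x ((h x).2 w)) (b (h x).1 w))))) :=
      Deriv.ofLimp (hAC X (V × (W → Y))
        (fun x p => Fml.uni W (fun w => Fml.limp (a x (p.2 w)) (b p.1 w)))
        (fun x p w => qf_univ ⟨hqa x (p.2 w), hqb p.1 w⟩))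
    refine D2.comp ?_
    apply Deriv.exiL
    intro h
    exact Deriv.exiR _ _ (fun x w => (h x).2 w)
      (Deriv.exiR _ _ (fun x => (h x).1) (Deriv.id _))
  · -- backward: [C] ⊢ A ⊸ B
    have rev' : Deriv [Fml.exi (X → W → Y) (fun f => Fml.exi (X → V) (fun g =>
        Fml.uni X (fun x => Fml.uni W (fun w =>
          Fml.limp (a x (f x w)) (b (g x) w)))))] (Fml.limp A' B') := by
      apply Deriv.exiL
      intro f
      apply Deriv.exiL
      intro g
      apply Deriv.limpR
      apply Deriv.exiL
      intro x
      apply Deriv.exiR V _ (g x)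
      apply Deriv.uniR
      intro w
      refine Deriv.exch (List.Perm.swap _ _ _) ?_
      apply Deriv.uniL X _ x
      apply Deriv.uniL W _ w
      exact Deriv.limpL (Δ := []) (Deriv.uniL Y _ (f x w) (Deriv.id _)) (Deriv.id _)
    refine rev'.comp ?_
    apply Deriv.limpR
    exact Deriv.exch (List.Perm.swap _ _ _) (Deriv.limpL (Δ := []) hAA' hB'B)
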